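/- If M is an invertible column-stochastic matrix (nonnegative entries, columns summing to 1) of size n ≥ 2 with all entries strictly positive, then its inverse M⁻¹ has at least one negative entry. -/

import Mathlib

open Matrix

namespace Matrix

variable {l m n R : Type*} [Fintype m] [Semiring R] [LinearOrder R] [IsStrictOrderedRing R]

theorem row_eq_zero_of_mul_apply_eq_zero {A : Matrix l m R} {B : Matrix m n R} {i : l} {j : n}
    (hA : ∀ k, 0 ≤ A i k) (hB : ∀ k, 0 < B k j) (h : (A * B) i j = 0) (k : m) :
    A i k = 0 := by
  rw [mul_apply] at h
  have hk := (Finset.sum_eq_zero_iff_of_nonneg fun k _ => mul_nonneg (hA k) (hB k).le).mp h k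
    (Finset.mem_univ k)
  by_contra hne
  exact (mul_pos ((hA k).lt_of_ne' hne) (hB k)).ne' hk

theorem mul_ne_one_of_nonneg_of_pos [DecidableEq m] [Nontrivial m] {A B : Matrix m m R}
    (hA : ∀ i j, 0 ≤ A i j) (hB : ∀ i j, 0 < B i j) : A * B ≠ 1 := by
  intro hAB
  obtain ⟨i, j, hij⟩ := exists_pair_ne m
  have hrow : ∀ k, A i k = 0 :=
    row_eq_zero_of_mul_apply_eq_zero (hA i) (fun k => hB k j) (by rw [hAB, one_apply_ne hij])
  have hii : (A * B) i i = 1 := by rw [hAB, one_apply_eq]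
  simp [mul_apply, hrow] at hii

end Matrix

theorem stmt0_general (n : ℕ) (hn : 2 ≤ n) (M : Matrix (Fin n) (Fin n) ℝ)
    (hM : IsUnit M.det)
    (hpos : ∀ i j, 0 < M i j) :
    ∃ i j, M⁻¹ i j < 0 := by
  have : Nontrivial (Fin n) := Fin.nontrivial_iff_two_le.mpr hn
  by_contra! hnonneg
  exact mul_ne_one_of_nonneg_of_pos hnonneg hpos (nonsing_inv_mul M hM)

theorem stmt0 (n : ℕ) (hn : 2 ≤ n) (M : Matrix (Fin n) (Fin n) ℝ)
    (hM : IsUnit M.det)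
    (hpos : ∀ i j, 0 < M i j)
    (hcol : ∀ j, ∑ i, M i j = 1) :
    ∃ i j, M⁻¹ i j < 0 :=
  stmt0_general n hn M hM hpos
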